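/- Let smin_c(x) = c·smin(x/c) with c ≥ 1. For all x, ℓ ∈ ℝ^n with x, ℓ ≥ 0, ‖∇smin_c(x+ℓ) − ∇smin_c(x)‖_1 ≤ (2/c)·∇smin_c(x)ᵀℓ. -/

import Mathlib

/-!
Write `p = ∇smin_c(x)` and `q = ∇smin_c(x + ℓ)`. Both are probability vectors, so
`‖q - p‖₁ = 2 ∑ᵢ (pᵢ - qᵢ)⁺`. Raising every coordinate can only shrink the normaliser, hence
`qᵢ ≥ pᵢ e^{-ℓᵢ/c}`, and `1 - e^{-t} ≤ t` gives `(pᵢ - qᵢ)⁺ ≤ pᵢ ℓᵢ / c`.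
-/

open Finset Real

theorem Finset.sum_abs_sub_eq_two_mul_sum_posPart {ι : Type*} (s : Finset ι) {p q : ι → ℝ}
    (h : ∑ i ∈ s, p i = ∑ i ∈ s, q i) :
    ∑ i ∈ s, |q i - p i| = 2 * ∑ i ∈ s, (p i - q i)⁺ := by
  have habs : ∀ i, |q i - p i| = 2 * (p i - q i)⁺ - (p i - q i) := fun i => by
    rw [abs_sub_comm, ← posPart_add_negPart]
    linarith [posPart_sub_negPart (p i - q i)]
  rw [sum_congr rfl fun i _ => habs i, sum_sub_distrib, ← mul_sum, sum_sub_distrib, h]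
  ring

namespace SoftMin

variable {ι : Type*} [Fintype ι]

/-- The gradient `∇smin_c(x)` of `smin_c(x) = c · smin(x / c)`: the softmax of `-x / c`. -/
noncomputable def grad (c : ℝ) (x : ι → ℝ) (i : ι) : ℝ :=
  exp (-(x i / c)) / ∑ j, exp (-(x j / c))

theorem grad_nonneg (c : ℝ) (x : ι → ℝ) (i : ι) : 0 ≤ grad c x i := by
  unfold grad
  positivity

theorem sum_grad [Nonempty ι] (c : ℝ) (x : ι → ℝ) : ∑ i, grad c x i = 1 := by
  simp only [grad, ← sum_div]
  exact div_self (sum_pos (fun i _ => exp_pos _) univ_nonempty).ne'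

theorem grad_sub_grad_add_le {c : ℝ} (hc : 0 < c) (x : ι → ℝ) {ℓ : ι → ℝ} (hℓ : ∀ i, 0 ≤ ℓ i)
    (i : ι) : grad c x i - grad c (x + ℓ) i ≤ grad c x i * (ℓ i / c) := by
  have : Nonempty ι := ⟨i⟩
  set S := ∑ j, exp (-(x j / c))
  set T := ∑ j, exp (-((x j + ℓ j) / c))
  have hT : 0 < T := sum_pos (fun j _ => exp_pos _) univ_nonempty
  have hTS : T ≤ S := sum_le_sum fun j _ => exp_le_exp.2 <| neg_le_neg <|
    div_le_div_of_nonneg_right (le_add_of_nonneg_right (hℓ j)) hc.le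
  have hsplit : exp (-((x i + ℓ i) / c)) = exp (-(x i / c)) * exp (-(ℓ i / c)) := by
    rw [← exp_add]
    ring_nf
  have hshift : grad c x i * exp (-(ℓ i / c)) ≤ grad c (x + ℓ) i :=
    calc grad c x i * exp (-(ℓ i / c)) = exp (-(x i / c)) * exp (-(ℓ i / c)) / S :=
          div_mul_eq_mul_div _ _ _
      _ ≤ exp (-(x i / c)) * exp (-(ℓ i / c)) / T :=
          div_le_div_of_nonneg_left (by positivity) hT hTS
      _ = grad c (x + ℓ) i := by simp only [grad, Pi.add_apply, hsplit, T]
  have hexp : 1 - ℓ i / c ≤ exp (-(ℓ i / c)) := by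
    linarith [add_one_le_exp (-(ℓ i / c))]
  linarith [mul_le_mul_of_nonneg_left hexp (grad_nonneg c x i)]

theorem sum_abs_grad_add_sub_grad_le {c : ℝ} (hc : 0 < c) (x : ι → ℝ) {ℓ : ι → ℝ}
    (hℓ : ∀ i, 0 ≤ ℓ i) :
    ∑ i, |grad c (x + ℓ) i - grad c x i| ≤ (2 / c) * ∑ i, grad c x i * ℓ i := by
  cases isEmpty_or_nonempty ι
  · simp
  rw [sum_abs_sub_eq_two_mul_sum_posPart _ (by rw [sum_grad, sum_grad])]
  calc 2 * ∑ i, (grad c x i - grad c (x + ℓ) i)⁺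
      ≤ 2 * ∑ i, grad c x i * (ℓ i / c) := by
        gcongr with i
        exact sup_le (grad_sub_grad_add_le hc x hℓ i)
          (mul_nonneg (grad_nonneg c x i) (div_nonneg (hℓ i) hc.le))
    _ = (2 / c) * ∑ i, grad c x i * ℓ i := by
        rw [mul_sum, mul_sum]
        refine sum_congr rfl fun i _ => ?_
        ring

end SoftMin

theorem stmt_14_general (n : ℕ) (c : ℝ) (hc : 1 ≤ c) (x ℓ : Fin n → ℝ)
    (hℓ : ∀ i, 0 ≤ ℓ i) :
    ∑ i, |Real.exp (-((x i + ℓ i) / c)) / (∑ j, Real.exp (-((x j + ℓ j) / c))) -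
          Real.exp (-(x i / c)) / (∑ j, Real.exp (-(x j / c)))| ≤
      (2 / c) * ∑ i, (Real.exp (-(x i / c)) / ∑ j, Real.exp (-(x j / c))) * ℓ i :=
  SoftMin.sum_abs_grad_add_sub_grad_le (one_pos.trans_le hc) x hℓ

theorem stmt_14 (n : ℕ) (hn : 0 < n) (c : ℝ) (hc : 1 ≤ c) (x ℓ : Fin n → ℝ)
    (hx : ∀ i, 0 ≤ x i) (hℓ : ∀ i, 0 ≤ ℓ i) :
    ∑ i, |Real.exp (-((x i + ℓ i) / c)) / (∑ j, Real.exp (-((x j + ℓ j) / c))) -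
          Real.exp (-(x i / c)) / (∑ j, Real.exp (-(x j / c)))| ≤
      (2 / c) * ∑ i, (Real.exp (-(x i / c)) / ∑ j, Real.exp (-(x j / c))) * ℓ i :=
  stmt_14_general n c hc x ℓ hℓ
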